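/- arXiv:2006.03538 — 4 statements merged into one kernel-verified Lean document; each statement's English description precedes it below -/
import Mathlib

section
/- Let u, v be linearly independent unit vectors in ℝ² and let f = (f₁, f₂) be a vector field on ℝ² with f₁, f₂ ∈ C²_c(ℝ²). Then L f(x) = 0 for all x ∈ ℝ² if and only if there exists a continuously differentiable scalar function V : ℝ² → ℝ with f = ∇V on all of ℝ². -/
open MeasureTheory Matrix

noncomputable section

/-- Dot product on ℝ². -/
def dot2 (u v : ℝ × ℝ) : ℝ := u.1 * v.1 + u.2 * v.2

/-- `x^⊥ = (-x₂, x₁)`. -/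
def perp2 (x : ℝ × ℝ) : ℝ × ℝ := (-x.2, x.1)

/-- Divergent beam transform `X_u h (x) = ∫₀^∞ h(x + t u) dt`. -/
def Xbeam (u : ℝ × ℝ) (h : ℝ × ℝ → ℝ) (x : ℝ × ℝ) : ℝ :=
  ∫ t in Set.Ioi (0 : ℝ), h (x + t • u)

/-- First moment divergent beam transform `X¹_u h (x) = ∫₀^∞ t h(x + t u) dt`. -/
def Xmom (u : ℝ × ℝ) (h : ℝ × ℝ → ℝ) (x : ℝ × ℝ) : ℝ :=
  ∫ t in Set.Ioi (0 : ℝ), t * h (x + t • u)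

/-- Directional derivative `D_u h = u · ∇ h`. -/
def Ddir (u : ℝ × ℝ) (h : ℝ × ℝ → ℝ) (x : ℝ × ℝ) : ℝ := fderiv ℝ h x u

/-- Twice continuously differentiable, compactly supported. -/
def IsC2c (h : ℝ × ℝ → ℝ) : Prop := ContDiff ℝ 2 h ∧ HasCompactSupport h

/-- `div f = ∂f₁/∂x₁ + ∂f₂/∂x₂`. -/
def divf (f₁ f₂ : ℝ × ℝ → ℝ) (x : ℝ × ℝ) : ℝ :=
  fderiv ℝ f₁ x (1, 0) + fderiv ℝ f₂ x (0, 1)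

/-- `curl f = ∂f₂/∂x₁ - ∂f₁/∂x₂`. -/
def curlf (f₁ f₂ : ℝ × ℝ → ℝ) (x : ℝ × ℝ) : ℝ :=
  fderiv ℝ f₂ x (1, 0) - fderiv ℝ f₁ x (0, 1)

/-- Longitudinal V-line transform `L f = -X_u (f·u) + X_v (f·v)`. -/
def VlineL (u v : ℝ × ℝ) (f₁ f₂ : ℝ × ℝ → ℝ) (x : ℝ × ℝ) : ℝ :=
  - Xbeam u (fun y => f₁ y * u.1 + f₂ y * u.2) x
  + Xbeam v (fun y => f₁ y * v.1 + f₂ y * v.2) x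

/-- Transverse V-line transform `T f = -X_u (f·u^⊥) + X_v (f·v^⊥)`. -/
def VlineT (u v : ℝ × ℝ) (f₁ f₂ : ℝ × ℝ → ℝ) (x : ℝ × ℝ) : ℝ :=
  - Xbeam u (fun y => f₁ y * (perp2 u).1 + f₂ y * (perp2 u).2) x
  + Xbeam v (fun y => f₁ y * (perp2 v).1 + f₂ y * (perp2 v).2) x

/-- First moment longitudinal V-line transform `I f = -X¹_u (f·u) + X¹_v (f·v)`. -/
def VmomL (u v : ℝ × ℝ) (f₁ f₂ : ℝ × ℝ → ℝ) (x : ℝ × ℝ) : ℝ :=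
  - Xmom u (fun y => f₁ y * u.1 + f₂ y * u.2) x
  + Xmom v (fun y => f₁ y * v.1 + f₂ y * v.2) x

/-- First moment transverse V-line transform `J f = -X¹_u (f·u^⊥) + X¹_v (f·v^⊥)`. -/
def VmomT (u v : ℝ × ℝ) (f₁ f₂ : ℝ × ℝ → ℝ) (x : ℝ × ℝ) : ℝ :=
  - Xmom u (fun y => f₁ y * (perp2 u).1 + f₂ y * (perp2 u).2) x
  + Xmom v (fun y => f₁ y * (perp2 v).1 + f₂ y * (perp2 v).2) x

/-- Radon transform `R h (ψ, s) = ∫_ℝ h (s ψ + t ψ^⊥) dt`. -/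
def Radon2 (h : ℝ × ℝ → ℝ) (ψ : ℝ × ℝ) (s : ℝ) : ℝ :=
  ∫ t : ℝ, h (s • ψ + t • perp2 ψ)

/-- The (vector-valued) star transform. -/
def starS (m : ℕ) (γ : Fin m → ℝ × ℝ) (c : Fin m → ℝ)
    (f₁ f₂ : ℝ × ℝ → ℝ) (x : ℝ × ℝ) : ℝ × ℝ :=
  ∑ i, c i •
    (Xbeam (γ i) (fun y => f₁ y * (γ i).1 + f₂ y * (γ i).2) x,
     Xbeam (γ i) (fun y => f₁ y * (perp2 (γ i)).1 + f₂ y * (perp2 (γ i)).2) x)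

/-- `γ(ψ) = -∑ cᵢ γᵢ / (ψ·γᵢ)`. -/
def starGamma (m : ℕ) (γ : Fin m → ℝ × ℝ) (c : Fin m → ℝ) (ψ : ℝ × ℝ) : ℝ × ℝ :=
  - ∑ i, (c i / dot2 ψ (γ i)) • γ i

/-- A star configuration is symmetric if `m = 2k` and, after re-indexing by a
permutation, `γᵢ = -γ_{k+i}` and `cᵢ = -c_{k+i}` for `i = 1, …, k`. -/
def StarSymmetric (m : ℕ) (γ : Fin m → ℝ × ℝ) (c : Fin m → ℝ) : Prop :=
  ∃ k : ℕ, ∃ hk : m = 2 * k, ∃ σ : Equiv.Perm (Fin m),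
    ∀ i : Fin m, ∀ hi : (i : ℕ) < k,
      γ (σ i) = - γ (σ ⟨(i : ℕ) + k, by omega⟩) ∧
      c (σ i) = - c (σ ⟨(i : ℕ) + k, by omega⟩)

/-!
Write `Φ y = f₁ y dx₁ + f₂ y dx₂`. Differentiating under the integral sign,
`D (X_w h) (x) w = -h x`. If `L f = 0`, then `X_u (Φ·u) = X_v (Φ·v)`, so the derivative of
`-X_u (Φ·u)` at `x` agrees with `Φ x` at both `u` and `v`. Since `u, v` form a basis, the two
are equal.

Conversely, if `Φ = dV`, then `dV` vanishes outside a ball. The exterior of a ball in the plane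
is connected, so `V` equals a constant `c` there. The fundamental theorem of calculus along rays
then gives `X_w (dV·w) (x) = c - V x` for every `w ≠ 0`, and the two terms of `L f` cancel.
-/

open Metric Set Filter Topology ContinuousLinearMap

lemma HasCompactSupport.exists_eq_zero_of_lt_norm {E F : Type*} [SeminormedAddCommGroup E]
    [Zero F] {g : E → F} (hg : HasCompactSupport g) :
    ∃ R, ∀ y, R < ‖y‖ → g y = 0 := by
  obtain ⟨R, hR⟩ := hg.isCompact.isBounded.subset_closedBall 0
  refine ⟨R, fun y hy => image_eq_zero_of_notMem_tsupport fun hmem => ?_⟩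
  have := hR hmem
  rw [mem_closedBall_zero_iff] at this
  linarith

section NormedSpace

variable {E : Type*} [NormedAddCommGroup E] [NormedSpace ℝ E]

lemma exists_forall_lt_norm_add_smul {w : E} (hw : w ≠ 0) (x₀ : E) (R : ℝ) :
    ∃ T > 0, ∀ x ∈ ball x₀ 1, ∀ t : ℝ, T ≤ t → R < ‖x + t • w‖ := by
  have hw' : 0 < ‖w‖ := norm_pos_iff.mpr hw
  refine ⟨(‖x₀‖ + 1 + max R 0) / ‖w‖ + 1, by positivity, fun x hx t ht => ?_⟩
  have hx' : ‖x‖ < ‖x₀‖ + 1 := by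
    have := norm_le_norm_add_norm_sub' x x₀
    rw [mem_ball_iff_norm] at hx
    linarith
  have hT : (‖x₀‖ + 1 + max R 0) + ‖w‖ ≤ t * ‖w‖ := by
    calc (‖x₀‖ + 1 + max R 0) + ‖w‖ = ((‖x₀‖ + 1 + max R 0) / ‖w‖ + 1) * ‖w‖ := by
          field_simp
      _ ≤ t * ‖w‖ := by gcongr
  have htw : t * ‖w‖ ≤ ‖x + t • w‖ + ‖x‖ := by
    have := norm_sub_le (x + t • w) x
    rwa [add_sub_cancel_left, norm_smul, Real.norm_of_nonneg (le_trans (by positivity) ht)]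
      at this
  linarith [le_max_left R 0]

lemma HasCompactSupport.exists_forall_add_smul_eq_zero {F : Type*} [Zero F] {g : E → F}
    (hg : HasCompactSupport g) {w : E} (hw : w ≠ 0) (x₀ : E) :
    ∃ T > 0, ∀ x ∈ ball x₀ 1, ∀ t : ℝ, T ≤ t → g (x + t • w) = 0 := by
  obtain ⟨R, hR⟩ := hg.exists_eq_zero_of_lt_norm
  obtain ⟨T, hT, hfar⟩ := exists_forall_lt_norm_add_smul hw x₀ R
  exact ⟨T, hT, fun x hx t ht => hR _ (hfar x hx t ht)⟩

variable {F : Type*} [NormedAddCommGroup F] [NormedSpace ℝ F]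

lemma hasDerivAt_comp_add_smul {f : E → F} {x w : E} {t : ℝ}
    (hf : DifferentiableAt ℝ f (x + t • w)) :
    HasDerivAt (fun s : ℝ => f (x + s • w)) (fderiv ℝ f (x + t • w) w) t := by
  have hline : HasDerivAt (fun s : ℝ => x + s • w) w t := by
    simpa using ((hasDerivAt_id t).smul_const w).const_add x
  exact hf.hasFDerivAt.comp_hasDerivAt t hline

lemma integral_fderiv_add_smul_eq_sub [CompleteSpace F] {f : E → F} (hf : ContDiff ℝ 1 f)
    (x w : E) (a b : ℝ) :
    ∫ t in a..b, fderiv ℝ f (x + t • w) w = f (x + b • w) - f (x + a • w) := by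
  refine intervalIntegral.integral_eq_sub_of_hasDerivAt
    (fun t _ => hasDerivAt_comp_add_smul (hf.differentiable one_ne_zero _)) ?_
  refine Continuous.intervalIntegrable ?_ a b
  exact ((hf.continuous_fderiv one_ne_zero).comp (by fun_prop)).clm_apply continuous_const

lemma isPreconnected_compl_closedBall (h : 1 < Module.rank ℝ E) (R : ℝ) :
    IsPreconnected (closedBall (0 : E) R)ᶜ := by
  rcases lt_or_ge R 0 with hR | hR
  · rw [closedBall_eq_empty.mpr hR, compl_empty]
    exact isPreconnected_univ
  have himage : (fun p : E × ℝ => p.2 • p.1) '' (sphere 0 1 ×ˢ Ioi R) = (closedBall 0 R)ᶜ := by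
    ext z
    simp only [mem_image, mem_prod, mem_sphere_zero_iff_norm, mem_Ioi, mem_compl_iff,
      mem_closedBall_zero_iff, not_le, Prod.exists]
    constructor
    · rintro ⟨y, s, ⟨hy, hs⟩, rfl⟩
      rwa [norm_smul, hy, mul_one, Real.norm_of_nonneg (by linarith)]
    · intro hz
      have hz0 : ‖z‖ ≠ 0 := by linarith
      exact ⟨‖z‖⁻¹ • z, ‖z‖, ⟨by rw [norm_smul, norm_inv, norm_norm, inv_mul_cancel₀ hz0], hz⟩,
        smul_inv_smul₀ hz0 z⟩
  rw [← himage]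
  exact ((isPreconnected_sphere h 0 1).prod isPreconnected_Ioi).image _
    (by fun_prop : Continuous fun p : E × ℝ => p.2 • p.1).continuousOn

lemma ContinuousLinearMap.ext_of_linearIndependent_pair {u v : E}
    (huv : LinearIndependent ℝ ![u, v]) (hE : Module.finrank ℝ E = 2) {φ ψ : E →L[ℝ] F}
    (hu : φ u = ψ u) (hv : φ v = ψ v) : φ = ψ := by
  have hcard : Fintype.card (Fin 2) = Module.finrank ℝ E := by simp [hE]
  refine coe_injective ((basisOfLinearIndependentOfCardEqFinrank huv hcard).ext fun i => ?_)
  fin_cases i <;> simpa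

end NormedSpace

lemma ContinuousLinearMap.eq_smul_fst_add_smul_snd (φ : ℝ × ℝ →L[ℝ] ℝ) :
    φ = φ (1, 0) • fst ℝ ℝ ℝ + φ (0, 1) • snd ℝ ℝ ℝ := by
  ext <;> simp

lemma Xbeam_eq_intervalIntegral {u : ℝ × ℝ} {g : ℝ × ℝ → ℝ} {x : ℝ × ℝ} {T : ℝ} (hT : 0 ≤ T)
    (hg : ∀ t, T < t → g (x + t • u) = 0) :
    Xbeam u g x = ∫ t in 0..T, g (x + t • u) := by
  rw [Xbeam, intervalIntegral.integral_of_le hT]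
  exact setIntegral_eq_of_subset_of_forall_sdiff_eq_zero measurableSet_Ioi Ioc_subset_Ioi_self
    fun t ht => hg t (not_le.mp fun htT => ht.2 ⟨ht.1, htT⟩)

lemma hasFDerivAt_Xbeam {u : ℝ × ℝ} (hu : u ≠ 0) {g : ℝ × ℝ → ℝ} (hg : ContDiff ℝ 1 g)
    (hgs : HasCompactSupport g) (x₀ : ℝ × ℝ) :
    ∃ L : ℝ × ℝ →L[ℝ] ℝ, HasFDerivAt (Xbeam u g) L x₀ ∧ L u = -g x₀ := by
  obtain ⟨T, hT, hvan⟩ := hgs.exists_forall_add_smul_eq_zero hu x₀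
  have hg' : Continuous (fderiv ℝ g) := hg.continuous_fderiv one_ne_zero
  obtain ⟨C, hC⟩ := hg'.bounded_above_of_compact_support (hgs.fderiv ℝ)
  have htrunc : Xbeam u g =ᶠ[𝓝 x₀] fun x => ∫ t in 0..T, g (x + t • u) := by
    filter_upwards [ball_mem_nhds x₀ one_pos] with x hx
    exact Xbeam_eq_intervalIntegral hT.le fun t ht => hvan x hx t ht.le
  have hderiv : HasFDerivAt (fun x => ∫ t in 0..T, g (x + t • u))
      (∫ t in 0..T, fderiv ℝ g (x₀ + t • u)) x₀ := by
    refine intervalIntegral.hasFDerivAt_integral_of_dominated_of_fderiv_le (bound := fun _ => C)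
      (F' := fun x t => fderiv ℝ g (x + t • u))
      (ball_mem_nhds x₀ one_pos) (Eventually.of_forall fun x => ?_) ?_ ?_
      (ae_of_all _ fun t _ x _ => hC _) intervalIntegrable_const
      (ae_of_all _ fun t _ x _ => ?_)
    · exact (hg.continuous.comp (by fun_prop)).aestronglyMeasurable
    · exact (hg.continuous.comp (by fun_prop)).intervalIntegrable _ _
    · exact (hg'.comp (by fun_prop)).aestronglyMeasurable
    · simpa [Function.comp_def] using (hg.differentiable one_ne_zero _).hasFDerivAt.comp x
        ((hasFDerivAt_id x).add_const (t • u))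
  refine ⟨_, hderiv.congr_of_eventuallyEq htrunc, ?_⟩
  have hline : Continuous fun t : ℝ => x₀ + t • u := by fun_prop
  rw [intervalIntegral_apply (φ := fun t => fderiv ℝ g (x₀ + t • u))
      ((hg'.comp hline).intervalIntegrable 0 T),
    integral_fderiv_add_smul_eq_sub hg, hvan x₀ (mem_ball_self one_pos) T le_rfl]
  simp

lemma hasFDerivAt_neg_Xbeam_of_Xbeam_eq {u v : ℝ × ℝ} (huv : LinearIndependent ℝ ![u, v])
    {Φ : ℝ × ℝ → ℝ × ℝ →L[ℝ] ℝ} (hΦ : ContDiff ℝ 1 Φ) (hΦs : HasCompactSupport Φ)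
    (h : Xbeam u (fun y => Φ y u) = Xbeam v (fun y => Φ y v)) (x : ℝ × ℝ) :
    HasFDerivAt (fun y => -Xbeam u (fun y => Φ y u) y) (Φ x) x := by
  have hΦw (w : ℝ × ℝ) : ContDiff ℝ 1 (fun y => Φ y w) := hΦ.clm_apply contDiff_const
  have hΦsw (w : ℝ × ℝ) : HasCompactSupport (fun y => Φ y w) :=
    hΦs.comp_left (g := fun φ : ℝ × ℝ →L[ℝ] ℝ => φ w) rfl
  obtain ⟨L₁, hL₁, hL₁u⟩ :=
    hasFDerivAt_Xbeam (by simpa using huv.ne_zero 0) (hΦw u) (hΦsw u) x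
  obtain ⟨L₂, hL₂, hL₂v⟩ :=
    hasFDerivAt_Xbeam (by simpa using huv.ne_zero 1) (hΦw v) (hΦsw v) x
  have hL : L₁ = L₂ := hL₁.unique (h ▸ hL₂)
  have hΦx : Φ x = -L₁ := by
    refine ext_of_linearIndependent_pair huv (by simp) ?_ ?_
    · simp [hL₁u]
    · simp [hL, hL₂v]
  exact hΦx ▸ hL₁.neg

lemma exists_Xbeam_fderiv_eq_sub {V : ℝ × ℝ → ℝ} (hV : ContDiff ℝ 1 V)
    (hVs : HasCompactSupport (fderiv ℝ V)) :
    ∃ c, ∀ w ≠ 0, ∀ x, Xbeam w (fun y => fderiv ℝ V y w) x = c - V x := by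
  obtain ⟨R, hR⟩ := hVs.exists_eq_zero_of_lt_norm
  have hrank : 1 < Module.rank ℝ (ℝ × ℝ) := by rw [rank_prod', Module.rank_self]; norm_num
  obtain ⟨c, hc⟩ := isClosed_closedBall.isOpen_compl.exists_is_const_of_fderiv_eq_zero
    (isPreconnected_compl_closedBall hrank R) (hV.differentiable one_ne_zero).differentiableOn
    fun y hy => hR y (by simpa using hy)
  refine ⟨c, fun w hw x => ?_⟩
  obtain ⟨T, hT, hfar⟩ := exists_forall_lt_norm_add_smul hw x R
  have hfar' (t : ℝ) (ht : T ≤ t) : R < ‖x + t • w‖ := hfar x (mem_ball_self one_pos) t ht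
  rw [Xbeam_eq_intervalIntegral hT.le fun t ht => by simp [hR _ (hfar' t ht.le)],
    integral_fderiv_add_smul_eq_sub hV, hc _ (by simpa using hfar' T le_rfl)]
  simp

theorem stmt0_general (u v : ℝ × ℝ)
    (huv : LinearIndependent ℝ ![u, v])
    (f₁ f₂ : ℝ × ℝ → ℝ) (hf₁ : IsC2c f₁) (hf₂ : IsC2c f₂) :
    (∀ x, VlineL u v f₁ f₂ x = 0) ↔
      ∃ V : ℝ × ℝ → ℝ, ContDiff ℝ 1 V ∧
        ∀ x, f₁ x = fderiv ℝ V x (1, 0) ∧ f₂ x = fderiv ℝ V x (0, 1) := by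
  set Φ : ℝ × ℝ → ℝ × ℝ →L[ℝ] ℝ := fun y => f₁ y • fst ℝ ℝ ℝ + f₂ y • snd ℝ ℝ ℝ
  have hΦ_apply (y w : ℝ × ℝ) : Φ y w = f₁ y * w.1 + f₂ y * w.2 := by simp [Φ]
  have hΦ : ContDiff ℝ 1 Φ :=
    ((hf₁.1.of_le one_le_two).smul contDiff_const).add
      ((hf₂.1.of_le one_le_two).smul contDiff_const)
  have hΦs : HasCompactSupport Φ := hf₁.2.smul_right.add hf₂.2.smul_right
  have hVlineL (x : ℝ × ℝ) : VlineL u v f₁ f₂ x =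
      -Xbeam u (fun y => Φ y u) x + Xbeam v (fun y => Φ y v) x := by
    simp only [hΦ_apply, VlineL]
  constructor
  · intro hzero
    have hX : Xbeam u (fun y => Φ y u) = Xbeam v (fun y => Φ y v) :=
      funext fun x => by linarith [hVlineL x, hzero x]
    have hV := hasFDerivAt_neg_Xbeam_of_Xbeam_eq huv hΦ hΦs hX
    refine ⟨_, contDiff_one_iff_fderiv.2 ⟨fun x => (hV x).differentiableAt, ?_⟩, fun x => ?_⟩
    · rw [funext fun x => (hV x).fderiv]
      exact hΦ.continuous
    · rw [(hV x).fderiv, hΦ_apply, hΦ_apply]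
      constructor <;> ring
  · rintro ⟨V, hV, hgrad⟩ x
    have hVΦ : fderiv ℝ V = Φ := funext fun y => by
      rw [eq_smul_fst_add_smul_snd (fderiv ℝ V y), ← (hgrad y).1, ← (hgrad y).2]
    obtain ⟨c, hc⟩ := exists_Xbeam_fderiv_eq_sub hV (hVΦ ▸ hΦs)
    rw [hVlineL, ← hVΦ, hc u (by simpa using huv.ne_zero 0), hc v (by simpa using huv.ne_zero 1)]
    ring

/-- `L f ≡ 0` iff `f = ∇V` for some `C¹` scalar function `V`. -/
theorem stmt0 (u v : ℝ × ℝ) (hu : u.1 ^ 2 + u.2 ^ 2 = 1) (hv : v.1 ^ 2 + v.2 ^ 2 = 1)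
    (huv : LinearIndependent ℝ ![u, v])
    (f₁ f₂ : ℝ × ℝ → ℝ) (hf₁ : IsC2c f₁) (hf₂ : IsC2c f₂) :
    (∀ x, VlineL u v f₁ f₂ x = 0) ↔
      ∃ V : ℝ × ℝ → ℝ, ContDiff ℝ 1 V ∧
        ∀ x, f₁ x = fderiv ℝ V x (1, 0) ∧ f₂ x = fderiv ℝ V x (0, 1) :=
  stmt0_general u v huv f₁ f₂ hf₁ hf₂
end
end

section
/- Let u, v be linearly independent unit vectors in ℝ² and let f = (f₁, f₂) be a vector field on ℝ² with f₁, f₂ ∈ C²_c(ℝ²). Then T f(x) = 0 for all x ∈ ℝ² if and only if div f(x) = 0 for all x ∈ ℝ². -/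
/-!
With `d = u₁v₂ - u₂v₁ ≠ 0`, the product rule gives `d · div f = D_v (f·u^⊥) - D_u (f·v^⊥)`.
Integrating over the wedge `x + ℝ₊u + ℝ₊v`, using `X_w (D_w h) = -h` on each ray and Fubini to
integrate the second term along `u` first, yields `T f (x) = d ∫∫_{s,t>0} div f (x + s u + t v)`.
Conversely, a continuous compactly supported function is determined by its wedge integrals:
the wedge integral at `x + a u`, as a function of `a`, is a tail integral `∫_a^∞`, whose
derivative recovers the ray integrals, and the same step along `v` recovers the function.
-/

open MeasureTheory Matrix

noncomputable section

open Set

section Rays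

variable {E : Type*} [NormedAddCommGroup E] [NormedSpace ℝ E] {M : Type*} [Zero M]

theorem HasCompactSupport.comp_add_linearMap {V : Type*} [NormedAddCommGroup V]
    [NormedSpace ℝ V] [FiniteDimensional ℝ V] {g : E → M} (hg : HasCompactSupport g)
    {L : V →ₗ[ℝ] E} (hL : Function.Injective L) (x : E) :
    HasCompactSupport fun p => g (x + L p) :=
  (hg.comp_homeomorph (Homeomorph.addLeft x)).comp_isClosedEmbedding
    (L.isClosedEmbedding_of_injective (LinearMap.ker_eq_bot.2 hL))

theorem HasCompactSupport.comp_ray {g : E → M} (hg : HasCompactSupport g) {w : E}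
    (hw : w ≠ 0) (x : E) : HasCompactSupport fun t : ℝ => g (x + t • w) :=
  hg.comp_add_linearMap (L := LinearMap.toSpanSingleton ℝ E w) (smul_left_injective ℝ hw) x

theorem HasCompactSupport.comp_plane {g : E → M} (hg : HasCompactSupport g) {u v : E}
    (huv : LinearIndependent ℝ ![u, v]) (x : E) :
    HasCompactSupport fun p : ℝ × ℝ => g (x + p.1 • u + p.2 • v) := by
  have hL : Function.Injective
      ((LinearMap.toSpanSingleton ℝ E u).coprod (LinearMap.toSpanSingleton ℝ E v)) := by
    refine (injective_iff_map_eq_zero _).2 fun p hp => ?_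
    obtain ⟨h₁, h₂⟩ := LinearIndependent.pair_iff.1 huv p.1 p.2 (by simpa using hp)
    exact Prod.ext h₁ h₂
  have key := hg.comp_add_linearMap hL x
  simp only [LinearMap.coprod_apply, LinearMap.toSpanSingleton_apply, ← add_assoc] at key
  exact key

theorem integral_Ioi_fderiv_ray {F : Type*} [NormedAddCommGroup F] [NormedSpace ℝ F]
    [CompleteSpace F] {h : E → F} (hh : ContDiff ℝ 1 h)
    (hcs : HasCompactSupport h) {w : E} (hw : w ≠ 0) (x : E) :
    ∫ t in Ioi (0 : ℝ), fderiv ℝ h (x + t • w) w = - h x := by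
  have hderiv (t : ℝ) :
      deriv (fun t : ℝ => h (x + t • w)) t = fderiv ℝ h (x + t • w) w := by
    have hline : HasDerivAt (fun t : ℝ => x + t • w) w t := by
      simpa using ((hasDerivAt_id t).smul_const w).const_add x
    exact ((hh.differentiable one_ne_zero _).hasFDerivAt.comp_hasDerivAt t hline).deriv
  have key := (hcs.comp_ray hw x).integral_Ioi_deriv_eq
    (f := fun t : ℝ => h (x + t • w)) (hh.comp (by fun_prop)) 0
  rw [zero_smul, add_zero] at key
  rw [← key]
  exact setIntegral_congr_fun measurableSet_Ioi fun t _ => (hderiv t).symm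

theorem Continuous.integrable_comp_ray {F : Type*} [NormedAddCommGroup F] {g : E → F}
    (hc : Continuous g) (hcs : HasCompactSupport g) {w : E} (hw : w ≠ 0) (x : E) :
    Integrable fun t : ℝ => g (x + t • w) :=
  (hc.comp (by fun_prop)).integrable_of_hasCompactSupport (hcs.comp_ray hw x)

end Rays

section ParametricIntegral

variable {X F : Type*} [TopologicalSpace X] [NormedAddCommGroup F] [NormedSpace ℝ F]
  {H : X × ℝ → F}

theorem continuous_setIntegral_of_hasCompactSupport [FirstCountableTopology X] (hc : Continuous H)
    (hcs : HasCompactSupport H) (s : Set ℝ) : Continuous fun x => ∫ t in s, H (x, t) := by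
  obtain ⟨C, hC⟩ := hcs.exists_bound_of_continuous hc
  have hK : IsCompact (Prod.snd '' tsupport H) := hcs.image continuous_snd
  refine continuous_of_dominated (bound := (Prod.snd '' tsupport H).indicator fun _ => C)
    (fun x => (hc.comp (by fun_prop)).aestronglyMeasurable) (fun x => ae_of_all _ fun t => ?_)
    ((integrable_indicator_iff hK.measurableSet).2 (integrableOn_const hK.measure_lt_top.ne))
    (ae_of_all _ fun t => hc.comp (by fun_prop))
  by_cases ht : t ∈ Prod.snd '' tsupport H
  · simpa [indicator_of_mem ht] using hC (x, t)
  · rw [indicator_of_notMem ht, image_eq_zero_of_notMem_tsupport fun hxt => ht ⟨_, hxt, rfl⟩,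
      norm_zero]

theorem HasCompactSupport.setIntegral [R1Space X] (hcs : HasCompactSupport H) (s : Set ℝ) :
    HasCompactSupport fun x => ∫ t in s, H (x, t) := by
  refine HasCompactSupport.intro (hcs.image continuous_fst) fun x hx => ?_
  have hzero (t : ℝ) : H (x, t) = 0 :=
    image_eq_zero_of_notMem_tsupport fun hxt => hx ⟨_, hxt, rfl⟩
  simp [hzero]

end ParametricIntegral

section TailIntegrals

variable {E F : Type*} [NormedAddCommGroup E] [NormedSpace ℝ E]
  [NormedAddCommGroup F] [NormedSpace ℝ F]

theorem setIntegral_Ioi_comp_add_right (φ : ℝ → F) (a : ℝ) :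
    ∫ t in Ioi 0, φ (t + a) = ∫ t in Ioi a, φ t := by
  simpa using (measurePreserving_add_right volume a).setIntegral_preimage_emb
    (measurableEmbedding_addRight a) φ (Ioi a)

variable [CompleteSpace F]

theorem eq_zero_of_forall_integral_Ioi_eq_zero {φ : ℝ → F} (hc : Continuous φ)
    (hi : Integrable φ) (h0 : ∀ a, ∫ t in Ioi a, φ t = 0) : φ = 0 := by
  have hprim : (fun b => ∫ t in (0 : ℝ)..b, φ t) = fun _ => 0 := by
    funext b
    rw [← intervalIntegral.integral_Ioi_sub_Ioi' hi.integrableOn hi.integrableOn, h0, h0,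
      sub_zero]
  funext b
  simpa [hprim] using (hc.deriv_integral φ 0 b).symm

theorem eq_zero_of_forall_integral_ray_eq_zero {h : E → F} {w : E}
    (hc : ∀ x, Continuous fun t : ℝ => h (x + t • w))
    (hi : ∀ x, Integrable fun t : ℝ => h (x + t • w))
    (h0 : ∀ x, ∫ t in Ioi (0 : ℝ), h (x + t • w) = 0) : h = 0 := by
  funext x
  have hline := eq_zero_of_forall_integral_Ioi_eq_zero (hc x) (hi x) fun a => by
    rw [← setIntegral_Ioi_comp_add_right, ← h0 (x + a • w)]
    simp only [add_smul, add_assoc, add_comm]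
  simpa using congrFun hline 0

end TailIntegrals

section Wedges

variable {E F : Type*} [NormedAddCommGroup E] [NormedSpace ℝ E]
  [NormedAddCommGroup F] [NormedSpace ℝ F] {g : E → F} {u v : E}

theorem continuous_integral_Ioi_comp_plane (hc : Continuous g) (hcs : HasCompactSupport g)
    (huv : LinearIndependent ℝ ![u, v]) (x : E) :
    Continuous fun s : ℝ => ∫ t in Ioi (0 : ℝ), g (x + s • u + t • v) :=
  continuous_setIntegral_of_hasCompactSupport (H := fun p : ℝ × ℝ => g (x + p.1 • u + p.2 • v))
    (hc.comp (by fun_prop)) (hcs.comp_plane huv x) _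

theorem integral_Ioi_integral_Ioi_comp_plane_comm (hc : Continuous g)
    (hcs : HasCompactSupport g) (huv : LinearIndependent ℝ ![u, v]) (x : E) :
    ∫ s in Ioi (0 : ℝ), ∫ t in Ioi (0 : ℝ), g (x + s • u + t • v) =
      ∫ t in Ioi (0 : ℝ), ∫ s in Ioi (0 : ℝ), g (x + t • v + s • u) := by
  have hint : Integrable (fun p : ℝ × ℝ => g (x + p.1 • u + p.2 • v)) :=
    (hc.comp (by fun_prop)).integrable_of_hasCompactSupport (hcs.comp_plane huv x)
  rw [integral_integral_swap (by
    rw [Measure.prod_restrict, ← Measure.volume_eq_prod]; exact hint.restrict)]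
  simp only [add_right_comm]

theorem integrable_integral_Ioi_comp_plane (hc : Continuous g) (hcs : HasCompactSupport g)
    (huv : LinearIndependent ℝ ![u, v]) (x : E) :
    Integrable fun s : ℝ => ∫ t in Ioi (0 : ℝ), g (x + s • u + t • v) :=
  (continuous_integral_Ioi_comp_plane hc hcs huv x).integrable_of_hasCompactSupport
    ((hcs.comp_plane huv x).setIntegral (H := fun p : ℝ × ℝ => g (x + p.1 • u + p.2 • v)) _)

variable [CompleteSpace F]

theorem integral_Ioi_integral_Ioi_fderiv_comp_plane {h : E → F} (hh : ContDiff ℝ 1 h)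
    (hcs : HasCompactSupport h) (huv : LinearIndependent ℝ ![u, v]) (x : E) :
    ∫ s in Ioi (0 : ℝ), ∫ t in Ioi (0 : ℝ), fderiv ℝ h (x + s • u + t • v) u =
      -∫ t in Ioi (0 : ℝ), h (x + t • v) := by
  have hu : u ≠ 0 := huv.ne_zero 0
  rw [integral_Ioi_integral_Ioi_comp_plane_comm
      ((hh.continuous_fderiv one_ne_zero).clm_apply continuous_const) (hcs.fderiv_apply ℝ u) huv,
    ← integral_neg]
  simp only [integral_Ioi_fderiv_ray hh hcs hu]

theorem eq_zero_of_forall_integral_wedge_eq_zero (hc : Continuous g)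
    (hcs : HasCompactSupport g) (huv : LinearIndependent ℝ ![u, v])
    (h0 : ∀ x, ∫ s in Ioi (0 : ℝ), ∫ t in Ioi (0 : ℝ), g (x + s • u + t • v) = 0) : g = 0 := by
  have hray : (fun x => ∫ t in Ioi (0 : ℝ), g (x + t • v)) = 0 :=
    eq_zero_of_forall_integral_ray_eq_zero (continuous_integral_Ioi_comp_plane hc hcs huv)
      (integrable_integral_Ioi_comp_plane hc hcs huv) h0
  have hv : v ≠ 0 := huv.ne_zero 1
  exact eq_zero_of_forall_integral_ray_eq_zero (fun x => hc.comp (by fun_prop))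
    (hc.integrable_comp_ray hcs hv) (congrFun hray)

end Wedges

section Plane

def transverseComponent (f₁ f₂ : ℝ × ℝ → ℝ) (w : ℝ × ℝ) (y : ℝ × ℝ) : ℝ :=
  f₁ y * (perp2 w).1 + f₂ y * (perp2 w).2

variable {f₁ f₂ : ℝ × ℝ → ℝ} {u v : ℝ × ℝ}

theorem det_ne_zero_of_linearIndependent (huv : LinearIndependent ℝ ![u, v]) :
    u.1 * v.2 - u.2 * v.1 ≠ 0 := by
  intro hdet
  have h₁ := LinearIndependent.pair_iff.1 huv v.2 (-u.2) (by ext <;> simp <;> linarith)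
  have h₂ := LinearIndependent.pair_iff.1 huv (-v.1) u.1 (by ext <;> simp <;> linarith)
  exact huv.ne_zero 0 (Prod.ext (by simpa using h₂.2) (by simpa using h₁.2))

theorem ContinuousLinearMap.apply_eq_fst_mul_add_snd_mul (L : ℝ × ℝ →L[ℝ] ℝ) (w : ℝ × ℝ) :
    L w = w.1 * L (1, 0) + w.2 * L (0, 1) := by
  conv_lhs => rw [show w = w.1 • ((1 : ℝ), (0 : ℝ)) + w.2 • ((0 : ℝ), (1 : ℝ)) by ext <;> simp]
  rw [map_add, map_smul, map_smul, smul_eq_mul, smul_eq_mul]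

theorem fderiv_transverseComponent_apply {y : ℝ × ℝ} (hf₁ : DifferentiableAt ℝ f₁ y)
    (hf₂ : DifferentiableAt ℝ f₂ y) (w z : ℝ × ℝ) :
    fderiv ℝ (transverseComponent f₁ f₂ w) y z =
      (z.1 * fderiv ℝ f₁ y (1, 0) + z.2 * fderiv ℝ f₁ y (0, 1)) * (perp2 w).1 +
      (z.1 * fderiv ℝ f₂ y (1, 0) + z.2 * fderiv ℝ f₂ y (0, 1)) * (perp2 w).2 := by
  unfold transverseComponent
  rw [fderiv_fun_add (hf₁.mul_const _) (hf₂.mul_const _),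
    fderiv_mul_const hf₁, fderiv_mul_const hf₂]
  simp only [_root_.add_apply, _root_.smul_apply, smul_eq_mul,
    ContinuousLinearMap.apply_eq_fst_mul_add_snd_mul (fderiv ℝ f₁ y) z,
    ContinuousLinearMap.apply_eq_fst_mul_add_snd_mul (fderiv ℝ f₂ y) z]
  ring

theorem det_mul_divf {y : ℝ × ℝ} (hf₁ : DifferentiableAt ℝ f₁ y)
    (hf₂ : DifferentiableAt ℝ f₂ y) :
    (u.1 * v.2 - u.2 * v.1) * divf f₁ f₂ y =
      fderiv ℝ (transverseComponent f₁ f₂ u) y v - fderiv ℝ (transverseComponent f₁ f₂ v) y u := by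
  rw [fderiv_transverseComponent_apply hf₁ hf₂, fderiv_transverseComponent_apply hf₁ hf₂, divf]
  simp only [perp2]
  ring

theorem ContDiff.transverseComponent (hf₁ : ContDiff ℝ 1 f₁) (hf₂ : ContDiff ℝ 1 f₂)
    (w : ℝ × ℝ) : ContDiff ℝ 1 (transverseComponent f₁ f₂ w) := by
  unfold _root_.transverseComponent
  fun_prop

theorem HasCompactSupport.transverseComponent (hcs₁ : HasCompactSupport f₁)
    (hcs₂ : HasCompactSupport f₂) (w : ℝ × ℝ) :
    HasCompactSupport (transverseComponent f₁ f₂ w) :=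
  hcs₁.mul_right.add hcs₂.mul_right

theorem ContDiff.continuous_divf (hf₁ : ContDiff ℝ 1 f₁) (hf₂ : ContDiff ℝ 1 f₂) :
    Continuous (divf f₁ f₂) :=
  ((hf₁.continuous_fderiv one_ne_zero).clm_apply continuous_const).add
    ((hf₂.continuous_fderiv one_ne_zero).clm_apply continuous_const)

theorem HasCompactSupport.divf (hcs₁ : HasCompactSupport f₁) (hcs₂ : HasCompactSupport f₂) :
    HasCompactSupport (divf f₁ f₂) :=
  (hcs₁.fderiv_apply ℝ _).add (hcs₂.fderiv_apply ℝ _)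

theorem VlineT_eq_det_mul_integral_wedge (hf₁ : ContDiff ℝ 1 f₁) (hf₂ : ContDiff ℝ 1 f₂)
    (hcs₁ : HasCompactSupport f₁) (hcs₂ : HasCompactSupport f₂)
    (huv : LinearIndependent ℝ ![u, v]) (x : ℝ × ℝ) :
    VlineT u v f₁ f₂ x = (u.1 * v.2 - u.2 * v.1) *
      ∫ s in Ioi (0 : ℝ), ∫ t in Ioi (0 : ℝ), divf f₁ f₂ (x + s • u + t • v) := by
  set gu := transverseComponent f₁ f₂ u
  set gv := transverseComponent f₁ f₂ v
  have hgu : ContDiff ℝ 1 gu := hf₁.transverseComponent hf₂ u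
  have hgv : ContDiff ℝ 1 gv := hf₁.transverseComponent hf₂ v
  have hgu_cs : HasCompactSupport gu := hcs₁.transverseComponent hcs₂ u
  have hgv_cs : HasCompactSupport gv := hcs₁.transverseComponent hcs₂ v
  have hDgu : Continuous fun y => fderiv ℝ gu y v :=
    (hgu.continuous_fderiv one_ne_zero).clm_apply continuous_const
  have hDgv : Continuous fun y => fderiv ℝ gv y u :=
    (hgv.continuous_fderiv one_ne_zero).clm_apply continuous_const
  have hu : u ≠ 0 := huv.ne_zero 0
  have hv : v ≠ 0 := huv.ne_zero 1
  have hinner (y : ℝ × ℝ) :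
      ∫ t in Ioi (0 : ℝ), (u.1 * v.2 - u.2 * v.1) * divf f₁ f₂ (y + t • v) =
        -gu y - ∫ t in Ioi (0 : ℝ), fderiv ℝ gv (y + t • v) u := by
    simp only [det_mul_divf (hf₁.differentiable one_ne_zero _)
      (hf₂.differentiable one_ne_zero _)]
    rw [integral_sub (hDgu.integrable_comp_ray (hgu_cs.fderiv_apply ℝ v) hv y).integrableOn
      (hDgv.integrable_comp_ray (hgv_cs.fderiv_apply ℝ u) hv y).integrableOn,
      integral_Ioi_fderiv_ray hgu hgu_cs hv]
  calc VlineT u v f₁ f₂ x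
      = -(∫ s in Ioi (0 : ℝ), gu (x + s • u)) -
          ∫ s in Ioi (0 : ℝ), ∫ t in Ioi (0 : ℝ), fderiv ℝ gv (x + s • u + t • v) u := by
        rw [integral_Ioi_integral_Ioi_fderiv_comp_plane hgv hgv_cs huv]
        simp only [VlineT, Xbeam, gu, gv, transverseComponent]; ring
    _ = ∫ s in Ioi (0 : ℝ), (-gu (x + s • u) -
          ∫ t in Ioi (0 : ℝ), fderiv ℝ gv (x + s • u + t • v) u) := by
        rw [integral_sub ?_
          (integrable_integral_Ioi_comp_plane hDgv (hgv_cs.fderiv_apply ℝ u) huv x).integrableOn,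
          integral_neg]
        exact (hgu.continuous.integrable_comp_ray hgu_cs hu x).integrableOn.neg
    _ = _ := by
        rw [← integral_const_mul]
        refine setIntegral_congr_fun measurableSet_Ioi fun s _ => ?_
        rw [← integral_const_mul, hinner]

end Plane

theorem stmt1_general (u v : ℝ × ℝ)
    (huv : LinearIndependent ℝ ![u, v])
    (f₁ f₂ : ℝ × ℝ → ℝ) (hf₁ : IsC2c f₁) (hf₂ : IsC2c f₂) :
    (∀ x, VlineT u v f₁ f₂ x = 0) ↔ (∀ x, divf f₁ f₂ x = 0) := by
  have h₁ := hf₁.1.of_le one_le_two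
  have h₂ := hf₂.1.of_le one_le_two
  simp only [VlineT_eq_det_mul_integral_wedge h₁ h₂ hf₁.2 hf₂.2 huv,
    mul_eq_zero, det_ne_zero_of_linearIndependent huv, false_or]
  exact ⟨fun hwedge => congrFun (eq_zero_of_forall_integral_wedge_eq_zero
      (h₁.continuous_divf h₂) (hf₁.2.divf hf₂.2) huv hwedge),
    fun hdiv x => by simp [hdiv]⟩

/-- `T f ≡ 0` iff `div f ≡ 0`. -/
theorem stmt1 (u v : ℝ × ℝ) (hu : u.1 ^ 2 + u.2 ^ 2 = 1) (hv : v.1 ^ 2 + v.2 ^ 2 = 1)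
    (huv : LinearIndependent ℝ ![u, v])
    (f₁ f₂ : ℝ × ℝ → ℝ) (hf₁ : IsC2c f₁) (hf₂ : IsC2c f₂) :
    (∀ x, VlineT u v f₁ f₂ x = 0) ↔ (∀ x, divf f₁ f₂ x = 0) :=
  stmt1_general u v huv f₁ f₂ hf₁ hf₂
end
end

section
/- Let γ₁, …, γ_m be distinct unit vectors in ℝ² and c₁, …, c_m nonzero real weights, and let f = (f₁, f₂) be a vector field on ℝ² with f₁, f₂ ∈ C²_c(ℝ²). If there exists a unit vector ψ ∈ ℝ² with ψ·γᵢ ≠ 0 for all i = 1,…,m and γ(ψ) ≠ 0, and S f(x) = 0 for all x ∈ ℝ², then f = 0 identically. -/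
open MeasureTheory Matrix

noncomputable section

/-
Pairing `S f = 0` with `x ↦ φ'(x·ψ)` and moving each beam transform onto the test function,
`∫ X_u g · φ'(·ψ) = (ψ·u)⁻¹ ∫ g φ(·ψ)`, turns the two components of `S f = 0` into
`γ(ψ)·J = γ(ψ)^⊥·J = 0` for the ridge integrals `J = (∫ f₁ φ(·ψ), ∫ f₂ φ(·ψ))`, so `J = 0`
whenever `ψ·γᵢ ≠ 0` for all `i` and `γ(ψ) ≠ 0`. Such directions `ψ` form an open cone, so each
`fⱼ` is orthogonal to `y ↦ e^{y·w}` for `w = 0` and for all `w` in the convex cone spanned by a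
small ball of them. These exponentials form a multiplicative monoid separating points, and
Stone–Weierstrass then makes `fⱼ` orthogonal to itself.
-/

open Set Function

lemma hasCompactSupport_of_ne_zero_imp_mem_image {α β M : Type*} [TopologicalSpace α]
    [TopologicalSpace β] [T2Space α] [Zero M] {f : α → M} {K : Set β} (hK : IsCompact K)
    {L : β → α} (hL : Continuous L) (h : ∀ x, f x ≠ 0 → x ∈ L '' K) : HasCompactSupport f :=
  HasCompactSupport.intro (hK.image hL) fun x hx => by_contra fun hne => hx (h x hne)

lemma dot2_add_smul (x u ψ : ℝ × ℝ) (t : ℝ) :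
    dot2 (x + t • u) ψ = dot2 x ψ + t * dot2 ψ u := by
  simp only [dot2, Prod.fst_add, Prod.snd_add, Prod.smul_fst, Prod.smul_snd, smul_eq_mul]
  ring

lemma integral_Ioi_deriv_comp_sub_mul {φ : ℝ → ℝ} (hφ : ContDiff ℝ 1 φ)
    (hφs : HasCompactSupport φ) (w : ℝ) {a : ℝ} (ha : a ≠ 0) :
    ∫ t in Ioi (0 : ℝ), deriv φ (w - t * a) = φ w / a := by
  set F : ℝ → ℝ := fun t => φ (w - t * a)
  have hFs : HasCompactSupport F :=
    hasCompactSupport_of_ne_zero_imp_mem_image hφs (L := fun s => (w - s) / a) (by fun_prop)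
      fun t ht => ⟨w - t * a, subset_tsupport _ ht, by field_simp; ring⟩
  have hderiv : ∀ t, deriv F t = -a * deriv φ (w - t * a) := fun t => by
    have hin : HasDerivAt (fun t : ℝ => w - t * a) (-a) t := by
      simpa using ((hasDerivAt_id t).mul_const a).const_sub w
    exact ((hφ.differentiable one_ne_zero _).hasDerivAt.comp t hin).deriv.trans (mul_comm _ _)
  have hFTC : ∫ t in Ioi (0 : ℝ), deriv F t = -F 0 :=
    hFs.integral_Ioi_deriv_eq (hφ.comp (by fun_prop)) 0
  simp only [hderiv, integral_const_mul, F, zero_mul, sub_zero] at hFTC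
  field_simp
  linarith

section Fubini

variable {u ψ : ℝ × ℝ} {g : ℝ × ℝ → ℝ} {ρ : ℝ → ℝ}

lemma integrable_beam_mul_comp_dot2 (ha : dot2 ψ u ≠ 0) (hg : Continuous g)
    (hgs : HasCompactSupport g) (hρ : Continuous ρ) (hρs : HasCompactSupport ρ) :
    Integrable (uncurry fun (x : ℝ × ℝ) (t : ℝ) => g (x + t • u) * ρ (dot2 x ψ))
      (volume.prod (volume.restrict (Ioi 0))) := by
  have hs : HasCompactSupport
      (uncurry fun (x : ℝ × ℝ) (t : ℝ) => g (x + t • u) * ρ (dot2 x ψ)) := by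
    refine hasCompactSupport_of_ne_zero_imp_mem_image (hgs.prod hρs)
      (L := fun p => (p.1 - ((dot2 p.1 ψ - p.2) / dot2 ψ u) • u, (dot2 p.1 ψ - p.2) / dot2 ψ u))
      (by unfold dot2; fun_prop) ?_
    rintro ⟨x, t⟩ hne
    refine ⟨(x + t • u, dot2 x ψ), ⟨subset_tsupport _ (left_ne_zero_of_mul hne),
      subset_tsupport _ (right_ne_zero_of_mul hne)⟩, ?_⟩
    have ht : (dot2 (x + t • u) ψ - dot2 x ψ) / dot2 ψ u = t := by
      rw [dot2_add_smul]; field_simp; ring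
    simp [ht]
  have hc : Continuous (uncurry fun (x : ℝ × ℝ) (t : ℝ) => g (x + t • u) * ρ (dot2 x ψ)) := by
    unfold dot2; fun_prop
  refine (hc.integrable_of_hasCompactSupport (μ := volume) hs).mono_measure ?_
  rw [Measure.volume_eq_prod]
  exact Measure.prod_mono le_rfl Measure.restrict_le_self

lemma integrable_comp_dot2_sub_mul (ha : dot2 ψ u ≠ 0) (hg : Continuous g)
    (hgs : HasCompactSupport g) (hρ : Continuous ρ) (hρs : HasCompactSupport ρ) :
    Integrable (uncurry fun (t : ℝ) (y : ℝ × ℝ) => g y * ρ (dot2 y ψ - t * dot2 ψ u))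
      ((volume.restrict (Ioi 0)).prod volume) := by
  have hs : HasCompactSupport
      (uncurry fun (t : ℝ) (y : ℝ × ℝ) => g y * ρ (dot2 y ψ - t * dot2 ψ u)) := by
    refine hasCompactSupport_of_ne_zero_imp_mem_image (hgs.prod hρs)
      (L := fun p => ((dot2 p.1 ψ - p.2) / dot2 ψ u, p.1)) (by unfold dot2; fun_prop) ?_
    rintro ⟨t, y⟩ hne
    refine ⟨(y, dot2 y ψ - t * dot2 ψ u), ⟨subset_tsupport _ (left_ne_zero_of_mul hne),
      subset_tsupport _ (right_ne_zero_of_mul hne)⟩, ?_⟩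
    simp only [Prod.mk.injEq, and_true]
    field_simp
    ring
  have hc : Continuous
      (uncurry fun (t : ℝ) (y : ℝ × ℝ) => g y * ρ (dot2 y ψ - t * dot2 ψ u)) := by
    unfold dot2; fun_prop
  refine (hc.integrable_of_hasCompactSupport (μ := volume) hs).mono_measure ?_
  rw [Measure.volume_eq_prod]
  exact Measure.prod_mono Measure.restrict_le_self le_rfl

lemma integrable_xbeam_mul_comp_dot2 (ha : dot2 ψ u ≠ 0) (hg : Continuous g)
    (hgs : HasCompactSupport g) (hρ : Continuous ρ) (hρs : HasCompactSupport ρ) :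
    Integrable fun x => Xbeam u g x * ρ (dot2 x ψ) := by
  simpa only [Xbeam, uncurry_apply_pair, integral_mul_const] using
    (integrable_beam_mul_comp_dot2 ha hg hgs hρ hρs).integral_prod_left

lemma integral_xbeam_mul_deriv_comp_dot2 (ha : dot2 ψ u ≠ 0) (hg : Continuous g)
    (hgs : HasCompactSupport g) {φ : ℝ → ℝ} (hφ : ContDiff ℝ 1 φ) (hφs : HasCompactSupport φ) :
    ∫ x, Xbeam u g x * deriv φ (dot2 x ψ) = (∫ y, g y * φ (dot2 y ψ)) / dot2 ψ u := by
  have hρ := hφ.continuous_deriv le_rfl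
  calc ∫ x, Xbeam u g x * deriv φ (dot2 x ψ)
      = ∫ x, ∫ t in Ioi 0, g (x + t • u) * deriv φ (dot2 x ψ) := by
        simp only [Xbeam, integral_mul_const]
    _ = ∫ t in Ioi 0, ∫ x, g (x + t • u) * deriv φ (dot2 x ψ) :=
        integral_integral_swap (integrable_beam_mul_comp_dot2 ha hg hgs hρ hφs.deriv)
    _ = ∫ t in Ioi 0, ∫ y, g y * deriv φ (dot2 y ψ - t * dot2 ψ u) := by
        refine setIntegral_congr_fun measurableSet_Ioi fun t _ => ?_
        rw [← integral_add_right_eq_self (fun y => g y * deriv φ (dot2 y ψ - t * dot2 ψ u)) (t • u)]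
        simp only [dot2_add_smul, add_sub_cancel_right]
    _ = ∫ y, ∫ t in Ioi 0, g y * deriv φ (dot2 y ψ - t * dot2 ψ u) :=
        integral_integral_swap (integrable_comp_dot2_sub_mul ha hg hgs hρ hφs.deriv)
    _ = ∫ y, g y * φ (dot2 y ψ) / dot2 ψ u := by
        simp only [integral_const_mul, integral_Ioi_deriv_comp_sub_mul hφ hφs _ ha, mul_div_assoc]
    _ = (∫ y, g y * φ (dot2 y ψ)) / dot2 ψ u := integral_div _ _

end Fubini

def ridgeIntegral (f : ℝ × ℝ → ℝ) (φ : ℝ → ℝ) (ψ : ℝ × ℝ) : ℝ :=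
  ∫ y, f y * φ (dot2 y ψ)

lemma dot2_sum_smul {ι : Type*} (s : Finset ι) (v : ℝ × ℝ) (a : ι → ℝ) (w : ι → ℝ × ℝ) :
    dot2 v (∑ i ∈ s, a i • w i) = ∑ i ∈ s, a i * dot2 v (w i) := by
  simp only [dot2, Prod.fst_sum, Prod.snd_sum, Prod.smul_fst, Prod.smul_snd, smul_eq_mul,
    Finset.mul_sum, ← Finset.sum_add_distrib]
  exact Finset.sum_congr rfl fun i _ => by ring

lemma perp2_sum_smul {ι : Type*} (s : Finset ι) (a : ι → ℝ) (w : ι → ℝ × ℝ) :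
    perp2 (∑ i ∈ s, a i • w i) = ∑ i ∈ s, a i • perp2 (w i) := by
  ext <;> simp [perp2, Prod.fst_sum, Prod.snd_sum]

lemma eq_zero_of_dot2_eq_zero_of_dot2_perp2_eq_zero {J v : ℝ × ℝ} (hv : v ≠ 0)
    (h : dot2 J v = 0) (h' : dot2 J (perp2 v) = 0) : J = 0 := by
  have hn : v.1 ^ 2 + v.2 ^ 2 ≠ 0 := fun h0 => by
    obtain ⟨h₁, h₂⟩ := (add_eq_zero_iff_of_nonneg (sq_nonneg _) (sq_nonneg _)).1 h0
    exact hv (Prod.ext (pow_eq_zero_iff two_ne_zero |>.1 h₁) (pow_eq_zero_iff two_ne_zero |>.1 h₂))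
  simp only [dot2, perp2] at h h'
  refine Prod.ext (mul_left_cancel₀ hn ?_) (mul_left_cancel₀ hn ?_) <;>
    simp only [Prod.fst_zero, Prod.snd_zero]
  · linear_combination v.1 * h - v.2 * h'
  · linear_combination v.2 * h + v.1 * h'

section StarTransform

variable {m : ℕ} {γ : Fin m → ℝ × ℝ} {c : Fin m → ℝ} {f₁ f₂ : ℝ × ℝ → ℝ} {ψ : ℝ × ℝ}
  {φ : ℝ → ℝ}

lemma integral_component_mul_comp_dot2 (hf₁ : Continuous f₁) (hf₁s : HasCompactSupport f₁)
    (hf₂ : Continuous f₂) (hf₂s : HasCompactSupport f₂) (hφ : Continuous φ) (v : ℝ × ℝ) :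
    ∫ y, (f₁ y * v.1 + f₂ y * v.2) * φ (dot2 y ψ) =
      dot2 (ridgeIntegral f₁ φ ψ, ridgeIntegral f₂ φ ψ) v := by
  have hint : ∀ f : ℝ × ℝ → ℝ, Continuous f → HasCompactSupport f →
      Integrable fun y => f y * φ (dot2 y ψ) := fun f hf hfs =>
    (hf.mul (hφ.comp (by unfold dot2; fun_prop))).integrable_of_hasCompactSupport hfs.mul_right
  simp only [add_mul, mul_right_comm _ v.1, mul_right_comm _ v.2]
  rw [integral_add ((hint _ hf₁ hf₁s).mul_const _) ((hint _ hf₂ hf₂s).mul_const _),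
    integral_mul_const, integral_mul_const]
  rfl

lemma dot2_ridgeIntegral_sum_eq_zero (hf₁ : Continuous f₁) (hf₁s : HasCompactSupport f₁)
    (hf₂ : Continuous f₂) (hf₂s : HasCompactSupport f₂) (hψ : ∀ i, dot2 ψ (γ i) ≠ 0)
    (hφ : ContDiff ℝ 1 φ) (hφs : HasCompactSupport φ) (w : Fin m → ℝ × ℝ)
    (hS : ∀ x, ∑ i, c i * Xbeam (γ i) (fun y => f₁ y * (w i).1 + f₂ y * (w i).2) x = 0) :
    dot2 (ridgeIntegral f₁ φ ψ, ridgeIntegral f₂ φ ψ) (∑ i, (c i / dot2 ψ (γ i)) • w i) = 0 := by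
  set J := (ridgeIntegral f₁ φ ψ, ridgeIntegral f₂ φ ψ)
  have hg : ∀ i, Continuous fun y => f₁ y * (w i).1 + f₂ y * (w i).2 := fun i => by fun_prop
  have hgs : ∀ i, HasCompactSupport fun y => f₁ y * (w i).1 + f₂ y * (w i).2 :=
    fun i => hf₁s.mul_right.add hf₂s.mul_right
  have hρ := hφ.continuous_deriv le_rfl
  calc dot2 J (∑ i, (c i / dot2 ψ (γ i)) • w i)
      = ∑ i, c i * ∫ x, Xbeam (γ i) (fun y => f₁ y * (w i).1 + f₂ y * (w i).2) x *
          deriv φ (dot2 x ψ) := by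
        rw [dot2_sum_smul]
        refine Finset.sum_congr rfl fun i _ => ?_
        rw [integral_xbeam_mul_deriv_comp_dot2 (hψ i) (hg i) (hgs i) hφ hφs,
          integral_component_mul_comp_dot2 hf₁ hf₁s hf₂ hf₂s hφ.continuous]
        ring
    _ = ∫ x, (∑ i, c i * Xbeam (γ i) (fun y => f₁ y * (w i).1 + f₂ y * (w i).2) x) *
          deriv φ (dot2 x ψ) := by
        simp only [Finset.sum_mul, mul_assoc]
        rw [integral_finsetSum _ fun i _ =>
          (integrable_xbeam_mul_comp_dot2 (hψ i) (hg i) (hgs i) hρ hφs.deriv).const_mul (c i)]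
        simp only [integral_const_mul]
    _ = 0 := by simp [hS]

variable (m γ c) in
def starAdmissible : Set (ℝ × ℝ) :=
  {ψ | (∀ i, dot2 ψ (γ i) ≠ 0) ∧ starGamma m γ c ψ ≠ 0}

lemma isOpen_starAdmissible : IsOpen (starAdmissible m γ c) := by
  have hdot : ∀ i, Continuous fun ψ : ℝ × ℝ => dot2 ψ (γ i) := fun i => by
    unfold dot2; fun_prop
  have hV : IsOpen {ψ : ℝ × ℝ | ∀ i, dot2 ψ (γ i) ≠ 0} := by
    simp only [ofPred_forall]
    exact isOpen_iInter_of_finite fun i => isOpen_ne.preimage (hdot i)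
  have hcont : ContinuousOn (starGamma m γ c) {ψ | ∀ i, dot2 ψ (γ i) ≠ 0} := by
    refine (continuousOn_finsetSum _ fun i _ => ?_).neg
    exact (continuousOn_const.div (hdot i).continuousOn
      fun ψ (hψ : ∀ i, dot2 ψ (γ i) ≠ 0) => hψ i).smul
      continuousOn_const
  exact hcont.isOpen_inter_preimage hV isOpen_compl_singleton

lemma smul_mem_starAdmissible (hψ : ψ ∈ starAdmissible m γ c) {t : ℝ} (ht : 0 < t) :
    t • ψ ∈ starAdmissible m γ c := by
  have hd : ∀ i, dot2 (t • ψ) (γ i) = t * dot2 ψ (γ i) := fun i => by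
    simp only [dot2, Prod.smul_fst, Prod.smul_snd, smul_eq_mul]; ring
  have hΓ : starGamma m γ c (t • ψ) = t⁻¹ • starGamma m γ c ψ := by
    simp only [starGamma, hd, smul_neg, Finset.smul_sum, smul_smul]
    congr 1
    exact Finset.sum_congr rfl fun i _ => by field_simp
  exact ⟨fun i => hd i ▸ mul_ne_zero ht.ne' (hψ.1 i),
    hΓ ▸ smul_ne_zero (inv_ne_zero ht.ne') hψ.2⟩

theorem ridgeIntegral_eq_zero_of_starS_eq_zero (hf₁ : Continuous f₁)
    (hf₁s : HasCompactSupport f₁) (hf₂ : Continuous f₂) (hf₂s : HasCompactSupport f₂)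
    (hS : ∀ x, starS m γ c f₁ f₂ x = 0) (hψ : ψ ∈ starAdmissible m γ c)
    (hφ : ContDiff ℝ 1 φ) (hφs : HasCompactSupport φ) :
    ridgeIntegral f₁ φ ψ = 0 ∧ ridgeIntegral f₂ φ ψ = 0 := by
  set v := ∑ i, (c i / dot2 ψ (γ i)) • γ i
  have hv : v ≠ 0 := fun h => hψ.2 (by simp [starGamma, v, h])
  have h₁ := dot2_ridgeIntegral_sum_eq_zero hf₁ hf₁s hf₂ hf₂s hψ.1 hφ hφs γ fun x => by
    simpa [starS, Prod.fst_sum] using congrArg Prod.fst (hS x)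
  have h₂ := dot2_ridgeIntegral_sum_eq_zero hf₁ hf₁s hf₂ hf₂s hψ.1 hφ hφs
    (fun i => perp2 (γ i)) fun x => by
    simpa [starS, Prod.snd_sum] using congrArg Prod.snd (hS x)
  rw [← perp2_sum_smul] at h₂
  simpa [Prod.ext_iff] using eq_zero_of_dot2_eq_zero_of_dot2_perp2_eq_zero hv h₁ h₂

end StarTransform

section Orthogonality

variable {X : Type*} [TopologicalSpace X] [MeasurableSpace X] [OpensMeasurableSpace X]
  {μ : Measure X} [IsFiniteMeasureOnCompacts μ] {f : X → ℝ}

lemma integral_mul_eq_zero_of_mem_adjoin (hf : Continuous f) (hfs : HasCompactSupport f)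
    {M : Submonoid C(X, ℝ)} (h : ∀ p ∈ M, ∫ x, f x * p x ∂μ = 0) {p : C(X, ℝ)}
    (hp : p ∈ Algebra.adjoin ℝ (M : Set C(X, ℝ))) : ∫ x, f x * p x ∂μ = 0 := by
  have hint : ∀ p : C(X, ℝ), Integrable (fun x => f x * p x) μ := fun p =>
    (hf.mul p.continuous).integrable_of_hasCompactSupport hfs.mul_right
  rw [← Subalgebra.mem_toSubmodule, Algebra.adjoin_eq_span, Submonoid.closure_eq] at hp
  induction hp using Submodule.span_induction with
  | mem p hp => exact h p hp
  | zero => simp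
  | add p q _ _ hp hq => simp [mul_add, integral_add (hint p) (hint q), hp, hq]
  | smul a p _ hp => simp [mul_left_comm, integral_const_mul, hp]

theorem eq_zero_of_integral_mul_eq_zero_of_separatesPoints [μ.IsOpenPosMeasure]
    (hf : Continuous f) (hfs : HasCompactSupport f) {M : Submonoid C(X, ℝ)}
    (hM : ((⇑) '' (M : Set C(X, ℝ))).SeparatesPoints)
    (h : ∀ p ∈ M, ∫ x, f x * p x ∂μ = 0) : f = 0 := by
  set A := Algebra.adjoin ℝ (M : Set C(X, ℝ))
  have hint : ∀ g : X → ℝ, Continuous g → Integrable (fun x => f x * g x) μ := fun g hg =>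
    (hf.mul hg).integrable_of_hasCompactSupport hfs.mul_right
  have horth : ∀ p ∈ A, ∫ x, f x * p x ∂μ = 0 := fun p hp =>
    integral_mul_eq_zero_of_mem_adjoin hf hfs h hp
  have hsep : A.SeparatesPoints := fun x y hxy =>
    let ⟨p, hp, hne⟩ := hM hxy
    ⟨p, image_mono Algebra.subset_adjoin hp, hne⟩
  have hsmall : ∀ ε > 0, ∫ x, f x * f x ∂μ ≤ ε * ∫ x, |f x| ∂μ := by
    intro ε hε
    obtain ⟨p, hpA, hp⟩ :=
      ContinuousMap.exists_mem_subalgebra_near_continuous_of_isCompact_of_separatesPoints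
        hsep ⟨f, hf⟩ hfs hε
    have hbound : ∀ x, f x * (f x - p x) ≤ ε * |f x| := fun x => by
      by_cases hx : x ∈ tsupport f
      · have hpx : |f x - p x| ≤ ε := by
          rw [abs_sub_comm]; exact (hp x hx).le
        calc f x * (f x - p x) ≤ |f x| * |f x - p x| := abs_mul (f x) _ ▸ le_abs_self _
          _ ≤ ε * |f x| := by rw [mul_comm]; gcongr
      · simp [image_eq_zero_of_notMem_tsupport hx]
    calc ∫ x, f x * f x ∂μ = (∫ x, f x * f x ∂μ) - ∫ x, f x * p x ∂μ := by
          rw [horth p hpA, sub_zero]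
      _ = ∫ x, f x * (f x - p x) ∂μ := by
          rw [← integral_sub (hint f hf) (hint p p.continuous)]
          simp only [mul_sub]
      _ ≤ ∫ x, ε * |f x| ∂μ := integral_mono (hint _ (hf.sub p.continuous))
          ((hf.abs.integrable_of_hasCompactSupport hfs.abs).const_mul ε) hbound
      _ = ε * ∫ x, |f x| ∂μ := integral_const_mul _ _
  have hsq : ∫ x, f x * f x ∂μ = 0 := by
    refine le_antisymm (le_of_forall_gt_imp_ge_of_dense fun δ hδ => ?_)
      (integral_nonneg fun x => mul_self_nonneg _)
    set C := ∫ x, |f x| ∂μ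
    have hC : 0 ≤ C := integral_nonneg fun x => abs_nonneg _
    calc ∫ x, f x * f x ∂μ ≤ δ / (C + 1) * C := hsmall _ (by positivity)
      _ ≤ δ := by rw [div_mul_eq_mul_div, div_le_iff₀ (by positivity)]; nlinarith
  have hae : (fun x => f x * f x) =ᵐ[μ] 0 :=
    (integral_eq_zero_iff_of_nonneg (fun x => mul_self_nonneg _) (hint f hf)).1 hsq
  ext x
  exact mul_self_eq_zero.1 (congrFun ((hf.mul hf).ae_eq_iff_eq μ continuous_const |>.1 hae) x)

end Orthogonality

lemma integral_mul_comp_dot2_eq_zero {f : ℝ × ℝ → ℝ} (hfs : HasCompactSupport f) {ψ : ℝ × ℝ}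
    (h : ∀ φ : ℝ → ℝ, ContDiff ℝ 1 φ → HasCompactSupport φ → ridgeIntegral f φ ψ = 0)
    {g : ℝ → ℝ} (hg : ContDiff ℝ 1 g) : ∫ y, f y * g (dot2 y ψ) = 0 := by
  obtain ⟨D, hD⟩ := (hfs.image (f := fun y => dot2 y ψ)
    (by unfold dot2; fun_prop)).isBounded.subset_closedBall 0
  let bump : ContDiffBump (0 : ℝ) := ⟨max D 1, max D 1 + 1, by positivity, by linarith⟩
  refine Eq.trans (integral_congr_ae (Filter.Eventually.of_forall fun y => ?_))
    (h (fun s => bump s * g s) (bump.contDiff.mul hg) bump.hasCompactSupport.mul_right)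
  by_cases hy : y ∈ tsupport f
  · have hball : dot2 y ψ ∈ Metric.closedBall (0 : ℝ) bump.rIn :=
      Metric.closedBall_subset_closedBall (le_max_left D 1) (hD (mem_image_of_mem _ hy))
    simp [bump.one_of_mem_closedBall hball]
  · simp [image_eq_zero_of_notMem_tsupport hy]

def expDot (w : ℝ × ℝ) : C(ℝ × ℝ, ℝ) :=
  ⟨fun y => Real.exp (dot2 y w), by unfold dot2; fun_prop⟩

lemma expDot_zero : expDot 0 = 1 := by
  ext y; simp [expDot, dot2]

lemma expDot_add (v w : ℝ × ℝ) : expDot (v + w) = expDot v * expDot w := by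
  ext y
  simp only [expDot, dot2, ContinuousMap.coe_mk, ContinuousMap.mul_apply, Prod.fst_add,
    Prod.snd_add, ← Real.exp_add]
  ring_nf

lemma exists_eq_expDot_of_mem_closure {B : Set (ℝ × ℝ)} {p : C(ℝ × ℝ, ℝ)}
    (hp : p ∈ Submonoid.closure (expDot '' B)) :
    ∃ w, (w = 0 ∨ w ∈ ConvexCone.hull ℝ B) ∧ p = expDot w := by
  induction hp using Submonoid.closure_induction with
  | mem p hp =>
    obtain ⟨z, hz, rfl⟩ := hp
    exact ⟨z, Or.inr (ConvexCone.subset_hull hz), rfl⟩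
  | one => exact ⟨0, Or.inl rfl, expDot_zero.symm⟩
  | mul p q _ _ hp hq =>
    obtain ⟨v, hv, rfl⟩ := hp
    obtain ⟨w, hw, rfl⟩ := hq
    refine ⟨v + w, ?_, (expDot_add v w).symm⟩
    rcases hv with rfl | hv
    · simpa using hw
    rcases hw with rfl | hw
    · simpa using Or.inr hv
    exact Or.inr ((ConvexCone.hull ℝ B).add_mem hv hw)

lemma separatesPoints_expDot_ball (ψ₀ : ℝ × ℝ) {ε : ℝ} (hε : 0 < ε) :
    ((⇑) '' (expDot '' Metric.ball ψ₀ ε)).SeparatesPoints := by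
  intro y y' hyy'
  by_contra! hsame
  have hdot : ∀ z ∈ Metric.ball ψ₀ ε, dot2 (y - y') z = 0 := fun z hz => by
    have := Real.exp_injective (hsame _ (mem_image_of_mem _ (mem_image_of_mem _ hz)))
    simp only [dot2, Prod.fst_sub, Prod.snd_sub] at this ⊢
    linarith
  set d := y - y'
  set s := ε / (2 * (‖d‖ + 1))
  have hs : 0 < s := by positivity
  have hmem : ψ₀ + s • d ∈ Metric.ball ψ₀ ε := by
    rw [Metric.mem_ball, dist_eq_norm, add_sub_cancel_left, norm_smul, Real.norm_of_nonneg hs.le,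
      div_mul_eq_mul_div, div_lt_iff₀ (by positivity)]
    nlinarith [norm_nonneg d]
  have hd : d.1 * d.1 + d.2 * d.2 = 0 := by
    have h₁ := hdot _ hmem
    have h₀ := hdot _ (Metric.mem_ball_self hε)
    simp only [dot2, Prod.fst_add, Prod.snd_add, Prod.smul_fst, Prod.smul_snd,
      smul_eq_mul] at h₀ h₁
    have : s * (d.1 * d.1 + d.2 * d.2) = 0 := by linear_combination h₁ - h₀
    exact (mul_eq_zero.1 this).resolve_left hs.ne'
  refine hyy' (sub_eq_zero.1 (Prod.ext ?_ ?_)) <;> simp only [Prod.fst_zero, Prod.snd_zero] <;>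
    nlinarith [mul_self_nonneg d.1, mul_self_nonneg d.2]

theorem eq_zero_of_ridgeIntegral_eq_zero {f : ℝ × ℝ → ℝ} (hf : Continuous f)
    (hfs : HasCompactSupport f) {U : Set (ℝ × ℝ)} (hU : IsOpen U) (hUne : U.Nonempty)
    (hUcone : ∀ ψ ∈ U, ∀ t : ℝ, 0 < t → t • ψ ∈ U)
    (h : ∀ ψ ∈ U, ∀ φ : ℝ → ℝ, ContDiff ℝ 1 φ → HasCompactSupport φ → ridgeIntegral f φ ψ = 0) :
    f = 0 := by
  obtain ⟨ψ₀, hψ₀⟩ := hUne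
  obtain ⟨ε, hε, hball⟩ := Metric.isOpen_iff.1 hU ψ₀ hψ₀
  have hsmooth : ∀ ψ ∈ U, ∀ g : ℝ → ℝ, ContDiff ℝ 1 g → ∫ y, f y * g (dot2 y ψ) = 0 :=
    fun ψ hψ g hg => integral_mul_comp_dot2_eq_zero hfs (h ψ hψ) hg
  refine eq_zero_of_integral_mul_eq_zero_of_separatesPoints (μ := volume) hf hfs
    (M := Submonoid.closure (expDot '' Metric.ball ψ₀ ε))
    (fun y y' hyy' => let ⟨p, hp, hne⟩ := separatesPoints_expDot_ball ψ₀ hε hyy'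
      ⟨p, image_mono Submonoid.subset_closure hp, hne⟩) fun p hp => ?_
  obtain ⟨w, rfl | hw, rfl⟩ := exists_eq_expDot_of_mem_closure hp
  · simpa [expDot_zero] using hsmooth ψ₀ hψ₀ (fun _ => 1) contDiff_const
  · obtain ⟨t, ht, z, hz, rfl⟩ := (ConvexCone.mem_hull_of_convex (convex_ball ψ₀ ε)).1 hw
    exact hsmooth _ (hUcone z (hball hz) t ht) Real.exp Real.contDiff_exp

theorem stmt7_general (m : ℕ) (γ : Fin m → ℝ × ℝ) (c : Fin m → ℝ)
    (f₁ f₂ : ℝ × ℝ → ℝ) (hf₁ : IsC2c f₁) (hf₂ : IsC2c f₂)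
    (hψ : ∃ ψ : ℝ × ℝ, ψ.1 ^ 2 + ψ.2 ^ 2 = 1 ∧ (∀ i, dot2 ψ (γ i) ≠ 0) ∧
      starGamma m γ c ψ ≠ 0)
    (hS : ∀ x, starS m γ c f₁ f₂ x = 0) :
    ∀ x, f₁ x = 0 ∧ f₂ x = 0 := by
  obtain ⟨ψ, -, hψ⟩ := hψ
  have hf₁c := hf₁.1.continuous
  have hf₂c := hf₂.1.continuous
  have hzero : ∀ {f : ℝ × ℝ → ℝ}, Continuous f → HasCompactSupport f →
      (∀ ψ ∈ starAdmissible m γ c, ∀ φ : ℝ → ℝ, ContDiff ℝ 1 φ → HasCompactSupport φ →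
        ridgeIntegral f φ ψ = 0) → f = 0 := fun hf hfs =>
    eq_zero_of_ridgeIntegral_eq_zero hf hfs isOpen_starAdmissible ⟨ψ, hψ⟩
      fun _ hψ' _ ht => smul_mem_starAdmissible hψ' ht
  have hridge := fun ψ (hψ : ψ ∈ starAdmissible m γ c) φ (hφ : ContDiff ℝ 1 φ) hφs =>
    ridgeIntegral_eq_zero_of_starS_eq_zero hf₁c hf₁.2 hf₂c hf₂.2 hS hψ hφ hφs
  have h₁ := hzero hf₁c hf₁.2 fun ψ hψ φ hφ hφs => (hridge ψ hψ φ hφ hφs).1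
  have h₂ := hzero hf₂c hf₂.2 fun ψ hψ φ hφ hφs => (hridge ψ hψ φ hφ hφs).2
  exact fun x => ⟨congrFun h₁ x, congrFun h₂ x⟩

/-- if some unit `ψ` has `ψ·γᵢ ≠ 0` for all `i` and `γ(ψ) ≠ 0`,
then `S f ≡ 0` implies `f ≡ 0`. -/
theorem stmt7 (m : ℕ) (γ : Fin m → ℝ × ℝ) (c : Fin m → ℝ)
    (hγu : ∀ i, (γ i).1 ^ 2 + (γ i).2 ^ 2 = 1) (hγd : Function.Injective γ)
    (hc : ∀ i, c i ≠ 0)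
    (f₁ f₂ : ℝ × ℝ → ℝ) (hf₁ : IsC2c f₁) (hf₂ : IsC2c f₂)
    (hψ : ∃ ψ : ℝ × ℝ, ψ.1 ^ 2 + ψ.2 ^ 2 = 1 ∧ (∀ i, dot2 ψ (γ i) ≠ 0) ∧
      starGamma m γ c ψ ≠ 0)
    (hS : ∀ x, starS m γ c f₁ f₂ x = 0) :
    ∀ x, f₁ x = 0 ∧ f₂ x = 0 :=
  stmt7_general m γ c f₁ f₂ hf₁ hf₂ hψ hS
end
end

section
/- Let u = (u₁,u₂), v = (v₁,v₂) be linearly independent unit vectors in ℝ² and let f = (f₁, f₂) be a vector field on ℝ² with f₁, f₂ ∈ C²_c(ℝ²). Then for every x ∈ ℝ², X_u f₁(x) - X_v f₁(x) = ∂(I f)/∂x₁ (x) + u₂ · X¹_u(curl f)(x) - v₂ · X¹_v(curl f)(x). -/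
open MeasureTheory Matrix

noncomputable section

/-!
For `g = f · w` one has `D_w f₁ = ∂₁ g - w₂ curl f` pointwise. Since
`(d/dt) f₁(x + t w) = D_w f₁(x + t w)`, integration by parts over `(0, ∞)` gives
`X¹_w (D_w f₁) = -X_w f₁`, and `∂₁` commutes with `X¹_w` because the integrand is compactly
supported in `t`. Hence `X_w f₁ = -∂₁ X¹_w g + w₂ X¹_w (curl f)`, and the theorem is the difference
of the cases `w = u` and `w = v`.
-/

open Set Filter Topology Metric

theorem integral_Ioi_mul_deriv_of_hasCompactSupport {φ φ' : ℝ → ℝ}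
    (hφ : ∀ t, HasDerivAt φ (φ' t) t) (hφs : HasCompactSupport φ)
    (hφ' : IntegrableOn (fun t => t * φ' t) (Ioi 0)) :
    ∫ t in Ioi 0, t * φ' t = -∫ t in Ioi 0, φ t := by
  have hφc : Continuous φ := continuous_iff_continuousAt.2 fun t => (hφ t).continuousAt
  have hibp := integral_Ioi_mul_deriv_eq_deriv_mul (a := 0) (u := id) (v := φ)
    (fun t _ => hasDerivAt_id t) (fun t _ => hφ t) hφ'
    (by simpa [Pi.mul_def] using
      (hφc.integrable_of_hasCompactSupport (μ := volume) hφs).integrableOn)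
    (by simpa using ((continuous_id.mul hφc).tendsto 0).mono_left nhdsWithin_le_nhds)
    (hφs.mul_left.is_zero_at_infty.mono_left atTop_le_cocompact)
  simpa using hibp

section Ray

variable {E F : Type*} [NormedAddCommGroup E] [NormedSpace ℝ E] [NormedAddCommGroup F] {w : E}

theorem isClosedEmbedding_add_smul (x : E) (hw : w ≠ 0) :
    IsClosedEmbedding fun t : ℝ => x + t • w :=
  (Homeomorph.addLeft x).isClosedEmbedding.comp (isClosedEmbedding_smul_left hw)

theorem HasCompactSupport.comp_add_smul {k : E → F} (hk : HasCompactSupport k) (x : E)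
    (hw : w ≠ 0) : HasCompactSupport fun t : ℝ => k (x + t • w) :=
  hk.comp_isClosedEmbedding (isClosedEmbedding_add_smul x hw)

theorem Continuous.integrable_smul_comp_add_smul [NormedSpace ℝ F] {k : E → F} (hk : Continuous k)
    (hks : HasCompactSupport k) (x : E) (hw : w ≠ 0) :
    Integrable fun t : ℝ => t • k (x + t • w) :=
  (continuous_id.smul (hk.comp (by fun_prop))).integrable_of_hasCompactSupport
    (hks.comp_add_smul x hw).smul_left

variable {h : E → ℝ}

theorem integral_Ioi_mul_fderiv_comp_add_smul (hh : ContDiff ℝ 1 h) (hhs : HasCompactSupport h)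
    (hw : w ≠ 0) (x : E) :
    ∫ t in Ioi (0 : ℝ), t * fderiv ℝ h (x + t • w) w = -∫ t in Ioi (0 : ℝ), h (x + t • w) := by
  refine integral_Ioi_mul_deriv_of_hasCompactSupport (fun t => ?_) (hhs.comp_add_smul x hw)
    ((hh.continuous_fderiv one_ne_zero).clm_apply continuous_const
      |>.integrable_smul_comp_add_smul (hhs.fderiv_apply (𝕜 := ℝ) w) x hw).integrableOn
  have hline : HasDerivAt (fun t : ℝ => x + t • w) w t := by
    simpa using ((hasDerivAt_id t).smul_const w).const_add x
  exact (hh.differentiable one_ne_zero _).hasFDerivAt.comp_hasDerivAt t hline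

theorem hasFDerivAt_integral_Ioi_mul_comp_add_smul [ProperSpace E] (hh : ContDiff ℝ 1 h)
    (hhs : HasCompactSupport h) (hw : w ≠ 0) (x : E) :
    HasFDerivAt (fun y => ∫ t in Ioi (0 : ℝ), t * h (y + t • w))
      (∫ t in Ioi (0 : ℝ), t • fderiv ℝ h (x + t • w)) x := by
  have hh' : Continuous (fderiv ℝ h) := hh.continuous_fderiv one_ne_zero
  obtain ⟨C, hC⟩ := hh'.norm.bddAbove_range_of_hasCompactSupport (hhs.fderiv ℝ).norm
  -- rays from points of `ball x 1` meet `tsupport (fderiv ℝ h)` only at parameters in `K`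
  set K := (fun t : ℝ => x + t • w) ⁻¹' cthickening 1 (tsupport (fderiv ℝ h))
  have hK : IsCompact K :=
    (isClosedEmbedding_add_smul x hw).isCompact_preimage (hhs.fderiv ℝ).isCompact.cthickening
  have hvanish : ∀ t ∉ K, ∀ y ∈ ball x 1, fderiv ℝ h (y + t • w) = 0 := by
    intro t ht y hy
    by_contra hne
    refine ht (mem_cthickening_of_dist_le _ (y + t • w) 1 _ (subset_tsupport _ hne) ?_)
    simpa [dist_comm] using (mem_ball.1 hy).le
  have hbound : ∀ t, ∀ y ∈ ball x 1,
      ‖t • fderiv ℝ h (y + t • w)‖ ≤ K.indicator (|·| * C) t := by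
    intro t y hy
    by_cases htK : t ∈ K
    · rw [indicator_of_mem htK, norm_smul, Real.norm_eq_abs]
      exact mul_le_mul_of_nonneg_left (hC ⟨_, rfl⟩) (abs_nonneg t)
    · rw [indicator_of_notMem htK, hvanish t htK y hy, smul_zero, norm_zero]
  refine hasFDerivAt_integral_of_dominated_of_fderiv_le (F := fun y t => t * h (y + t • w))
    (F' := fun y t => t • fderiv ℝ h (y + t • w)) (ball_mem_nhds x one_pos)
    (Eventually.of_forall fun y =>
      (continuous_id.mul (hh.continuous.comp (by fun_prop))).aestronglyMeasurable)
    (hh.continuous.integrable_smul_comp_add_smul hhs x hw).integrableOn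
    (continuous_id.smul (hh'.comp (by fun_prop))).aestronglyMeasurable
    (ae_of_all _ fun t y hy => hbound t y hy)
    ((continuous_abs.mul continuous_const).continuousOn.integrableOn_compact hK
      |>.integrable_indicator hK.measurableSet).restrict
    (ae_of_all _ fun t y _ => ?_)
  simpa using ((hh.differentiable one_ne_zero _).hasFDerivAt.comp y
    ((hasFDerivAt_id y).add_const (t • w))).const_mul t

end Ray
section Plane

variable {w : ℝ × ℝ} {h : ℝ × ℝ → ℝ}

theorem hasFDerivAt_Xmom (hh : ContDiff ℝ 1 h) (hhs : HasCompactSupport h) (hw : w ≠ 0)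
    (x : ℝ × ℝ) :
    HasFDerivAt (Xmom w h) (∫ t in Ioi (0 : ℝ), t • fderiv ℝ h (x + t • w)) x :=
  hasFDerivAt_integral_Ioi_mul_comp_add_smul hh hhs hw x

theorem differentiable_Xmom (hh : ContDiff ℝ 1 h) (hhs : HasCompactSupport h) (hw : w ≠ 0) :
    Differentiable ℝ (Xmom w h) :=
  fun x => (hasFDerivAt_Xmom hh hhs hw x).differentiableAt

theorem fderiv_Xmom_apply (hh : ContDiff ℝ 1 h) (hhs : HasCompactSupport h) (hw : w ≠ 0)
    (x e : ℝ × ℝ) : fderiv ℝ (Xmom w h) x e = Xmom w (fun z => fderiv ℝ h z e) x := by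
  have hint := (hh.continuous_fderiv one_ne_zero).integrable_smul_comp_add_smul
    (hhs.fderiv ℝ) x hw
  rw [(hasFDerivAt_Xmom hh hhs hw x).fderiv, ContinuousLinearMap.integral_apply hint.integrableOn]
  rfl

theorem Xmom_Ddir (hh : ContDiff ℝ 1 h) (hhs : HasCompactSupport h) (hw : w ≠ 0) (x : ℝ × ℝ) :
    Xmom w (Ddir w h) x = -Xbeam w h x :=
  integral_Ioi_mul_fderiv_comp_add_smul hh hhs hw x

theorem Xmom_sub {p q : ℝ × ℝ → ℝ} (x : ℝ × ℝ)
    (hp : Integrable fun t : ℝ => t * p (x + t • w))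
    (hq : Integrable fun t : ℝ => t * q (x + t • w)) :
    Xmom w (fun z => p z - q z) x = Xmom w p x - Xmom w q x := by
  simp only [Xmom, mul_sub]
  exact integral_sub hp.integrableOn hq.integrableOn

theorem Xmom_const_mul (c : ℝ) (x : ℝ × ℝ) :
    Xmom w (fun z => c * h z) x = c * Xmom w h x := by
  simp only [Xmom, mul_left_comm _ c]
  exact integral_const_mul c _

end Plane

theorem Ddir_eq_fderiv_dot_sub_curlf {f₁ f₂ : ℝ × ℝ → ℝ} {z : ℝ × ℝ}
    (hf₁ : DifferentiableAt ℝ f₁ z) (hf₂ : DifferentiableAt ℝ f₂ z) (w : ℝ × ℝ) :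
    Ddir w f₁ z = fderiv ℝ (fun y => f₁ y * w.1 + f₂ y * w.2) z (1, 0) - w.2 * curlf f₁ f₂ z := by
  have hw : w = w.1 • ((1 : ℝ), (0 : ℝ)) + w.2 • ((0 : ℝ), (1 : ℝ)) := by simp
  rw [fderiv_fun_add (hf₁.mul_const _) (hf₂.mul_const _), fderiv_mul_const hf₁,
    fderiv_mul_const hf₂, Ddir, curlf]
  conv_lhs => rw [hw]
  simp only [map_add, map_smul, _root_.add_apply, _root_.smul_apply, smul_eq_mul]
  ring

theorem Xbeam_eq_neg_fderiv_Xmom_add_curlf {f₁ f₂ : ℝ × ℝ → ℝ} (hf₁ : ContDiff ℝ 1 f₁)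
    (hf₁s : HasCompactSupport f₁) (hf₂ : ContDiff ℝ 1 f₂) (hf₂s : HasCompactSupport f₂)
    {w : ℝ × ℝ} (hw : w ≠ 0) (x : ℝ × ℝ) :
    Xbeam w f₁ x = -fderiv ℝ (Xmom w (fun y => f₁ y * w.1 + f₂ y * w.2)) x (1, 0)
      + w.2 * Xmom w (curlf f₁ f₂) x := by
  set g := fun y => f₁ y * w.1 + f₂ y * w.2
  have hg : ContDiff ℝ 1 g := by fun_prop
  have hgs : HasCompactSupport g := hf₁s.mul_right.add hf₂s.mul_right
  have hcont : ∀ {f : ℝ × ℝ → ℝ}, ContDiff ℝ 1 f → ∀ e, Continuous fun z => fderiv ℝ f z e :=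
    fun hf e => (hf.continuous_fderiv one_ne_zero).clm_apply continuous_const
  have hdg := (hcont hg (1, 0)).integrable_smul_comp_add_smul (hgs.fderiv_apply (𝕜 := ℝ) _) x hw
  have hcurlc : Continuous (curlf f₁ f₂) := (hcont hf₂ _).sub (hcont hf₁ _)
  have hcurls : HasCompactSupport (curlf f₁ f₂) :=
    (hf₂s.fderiv_apply (𝕜 := ℝ) _).sub (hf₁s.fderiv_apply (𝕜 := ℝ) _)
  have hcurl : Integrable fun t : ℝ => t * (w.2 * curlf f₁ f₂ (x + t • w)) := by
    simpa only [smul_eq_mul, mul_left_comm _ w.2] using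
      (hcurlc.integrable_smul_comp_add_smul hcurls x hw).const_mul w.2
  have hDdir : Ddir w f₁ = fun z => fderiv ℝ g z (1, 0) - w.2 * curlf f₁ f₂ z := funext fun z =>
    Ddir_eq_fderiv_dot_sub_curlf (hf₁.differentiable one_ne_zero z)
      (hf₂.differentiable one_ne_zero z) w
  calc Xbeam w f₁ x = -Xmom w (Ddir w f₁) x := by rw [Xmom_Ddir hf₁ hf₁s hw, neg_neg]
    _ = -(Xmom w (fun z => fderiv ℝ g z (1, 0)) x - w.2 * Xmom w (curlf f₁ f₂) x) := by
      rw [hDdir, Xmom_sub x hdg hcurl, Xmom_const_mul]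
    _ = _ := by rw [fderiv_Xmom_apply hg hgs hw]; ring

theorem hasFDerivAt_VmomL {f₁ f₂ : ℝ × ℝ → ℝ} (hf₁ : ContDiff ℝ 1 f₁)
    (hf₁s : HasCompactSupport f₁) (hf₂ : ContDiff ℝ 1 f₂) (hf₂s : HasCompactSupport f₂)
    {u v : ℝ × ℝ} (hu : u ≠ 0) (hv : v ≠ 0) (x : ℝ × ℝ) :
    HasFDerivAt (VmomL u v f₁ f₂)
      (-fderiv ℝ (Xmom u (fun y => f₁ y * u.1 + f₂ y * u.2)) x
        + fderiv ℝ (Xmom v (fun y => f₁ y * v.1 + f₂ y * v.2)) x) x := by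
  have hdiff : ∀ w : ℝ × ℝ, w ≠ 0 →
      Differentiable ℝ (Xmom w fun y => f₁ y * w.1 + f₂ y * w.2) := fun w hw =>
    differentiable_Xmom (h := fun y => f₁ y * w.1 + f₂ y * w.2) (by fun_prop)
      (hf₁s.mul_right.add hf₂s.mul_right) hw
  exact (hdiff u hu x).hasFDerivAt.neg.add (hdiff v hv x).hasFDerivAt

theorem stmt8_general (u v : ℝ × ℝ)
    (huv : LinearIndependent ℝ ![u, v])
    (f₁ f₂ : ℝ × ℝ → ℝ) (hf₁ : IsC2c f₁) (hf₂ : IsC2c f₂) (x : ℝ × ℝ) :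
    Xbeam u f₁ x - Xbeam v f₁ x
      = fderiv ℝ (VmomL u v f₁ f₂) x (1, 0)
        + u.2 * Xmom u (curlf f₁ f₂) x - v.2 * Xmom v (curlf f₁ f₂) x := by
  have hu : u ≠ 0 := by simpa using huv.ne_zero 0
  have hv : v ≠ 0 := by simpa using huv.ne_zero 1
  obtain ⟨hf₁, hf₁s⟩ := hf₁
  obtain ⟨hf₂, hf₂s⟩ := hf₂
  replace hf₁ : ContDiff ℝ 1 f₁ := hf₁.of_le one_le_two
  replace hf₂ : ContDiff ℝ 1 f₂ := hf₂.of_le one_le_two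
  rw [(hasFDerivAt_VmomL hf₁ hf₁s hf₂ hf₂s hu hv x).fderiv,
    Xbeam_eq_neg_fderiv_Xmom_add_curlf hf₁ hf₁s hf₂ hf₂s hu,
    Xbeam_eq_neg_fderiv_Xmom_add_curlf hf₁ hf₁s hf₂ hf₂s hv]
  simp only [_root_.add_apply, _root_.neg_apply]
  ring

/-- `X_u f₁ - X_v f₁ = ∂(I f)/∂x₁ + u₂ X¹_u(curl f) - v₂ X¹_v(curl f)`. -/
theorem stmt8 (u v : ℝ × ℝ) (hu : u.1 ^ 2 + u.2 ^ 2 = 1) (hv : v.1 ^ 2 + v.2 ^ 2 = 1)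
    (huv : LinearIndependent ℝ ![u, v])
    (f₁ f₂ : ℝ × ℝ → ℝ) (hf₁ : IsC2c f₁) (hf₂ : IsC2c f₂) (x : ℝ × ℝ) :
    Xbeam u f₁ x - Xbeam v f₁ x
      = fderiv ℝ (VmomL u v f₁ f₂) x (1, 0)
        + u.2 * Xmom u (curlf f₁ f₂) x - v.2 * Xmom v (curlf f₁ f₂) x :=
  stmt8_general u v huv f₁ f₂ hf₁ hf₂ x
end
end
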